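/- For κ = 1, the reduced Chaplygin vector field X (given by dM/dt = M × ω, dγ/dt = γ × ω) is conformally Hamiltonian: X = g^{-1} P_g dH with H = H1/2, where P_g is the Poisson bivector of the bracket {·,·}_g; equivalently, after the time change dt → g dt the equations become Hamiltonian with Hamiltonian H1/2. -/

import Mathlib

open scoped BigOperators
noncomputable section

/-- ℝ³ as functions `Fin 3 → ℝ`. -/
abbrev R3 := Fin 3 → ℝ

/-- Phase space: pairs `(γ, M)`. -/
abbrev St := R3 × R3

/-- Standard scalar product in ℝ³. -/
def dot3 (x y : R3) : ℝ := ∑ i, x i * y i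

/-- Cross product in ℝ³. -/
def cross (x y : R3) : R3 :=
  ![x 1 * y 2 - x 2 * y 1, x 2 * y 0 - x 0 * y 2, x 0 * y 1 - x 1 * y 0]

/-- Levi-Civita symbol. -/
def eps (i j k : Fin 3) : ℝ :=
  ((((j : ℤ) - (i : ℤ)) * ((k : ℤ) - (i : ℤ)) * ((k : ℤ) - (j : ℤ))) / 2 : ℤ)

/-- Application of the diagonal matrix A = diag a. -/
def Aapp (a : R3) (v : R3) : R3 := fun i => a i * v i

/-- Angular velocity ω expressed through M. -/
def omg (a : R3) (d : ℝ) (x : St) : R3 := fun i =>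
  a i * x.2 i + d * dot3 x.1 (Aapp a x.2) / (1 - d * dot3 x.1 (Aapp a x.1)) * (a i * x.1 i)

/-- g(γ) = sqrt(1 - d (γ, Aγ)). -/
def gfun (a : R3) (d : ℝ) (γ : R3) : ℝ := Real.sqrt (1 - d * dot3 γ (Aapp a γ))

/-- Partial derivative in the γ (inl) or M (inr) direction. -/
def pd : (Fin 3 ⊕ Fin 3) → (St → ℝ) → St → ℝ
  | .inl i, F, x => fderiv ℝ F x (Pi.single i 1, 0)
  | .inr i, F, x => fderiv ℝ F x (0, Pi.single i 1)

/-- Bracket of two functions determined by a structure matrix π. -/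
def pb (π : St → (Fin 3 ⊕ Fin 3) → (Fin 3 ⊕ Fin 3) → ℝ) (F G : St → ℝ) (x : St) : ℝ :=
  ∑ u, ∑ v, π x u v * pd u F x * pd v G x

/-- Structure matrix of the bracket {·,·}_g. -/
def piG (a : R3) (d : ℝ) (x : St) : (Fin 3 ⊕ Fin 3) → (Fin 3 ⊕ Fin 3) → ℝ
  | .inl _, .inl _ => 0
  | .inl i, .inr j => ∑ k, eps i j k * gfun a d x.1 * x.1 k
  | .inr i, .inl j => ∑ k, eps i j k * gfun a d x.1 * x.1 k
  | .inr i, .inr j => ∑ k, eps i j k *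
      (gfun a d x.1 * x.2 k - d * dot3 x.2 (Aapp a x.1) * x.1 k / gfun a d x.1)

/-- Coordinate functions on the phase space. -/
def coordFn : (Fin 3 ⊕ Fin 3) → St → ℝ
  | .inl i => fun x => x.1 i
  | .inr i => fun x => x.2 i

/-!
Both partial gradients of the kinetic energy `H = (M, ω) / 2` are multiples of `ω`: `∂H/∂M = ω`
and `∂H/∂γ = (d (γ, AM) / g²) ω`, where `g² = 1 - d (γ, Aγ)`. The bracket `{H, x_k}_g` is the
`k`-th component of `P_g dH`; in the `γ`-rows this is `g γ × ∂H/∂M = g γ × ω`, and in the `M`-rows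
the two terms proportional to `γ × ω` cancel exactly because `∂H/∂γ` carries the factor `1/g²`,
leaving `g M × ω`.
-/

theorem cross_eq_crossProduct (x y : R3) : cross x y = crossProduct x y :=
  (cross_apply x y).symm

theorem sum_eps_mul (u v : R3) (i : Fin 3) :
    ∑ j, (∑ k, eps j i k * u k) * v j = cross u v i := by
  fin_cases i <;> simp [eps, Fin.sum_univ_three, cross] <;> ring

theorem dot3_Aapp_comm (a u v : R3) : dot3 u (Aapp a v) = dot3 v (Aapp a u) := by
  simp only [dot3, Aapp, Fin.sum_univ_three]
  ring

theorem dot3_single_one (u : R3) (j : Fin 3) : dot3 u (Pi.single j 1) = u j :=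
  dotProduct_single_one u j

theorem pd_coordFn (u w : Fin 3 ⊕ Fin 3) (x : St) :
    pd u (coordFn w) x = if u = w then 1 else 0 := by
  have hγ (i : Fin 3) : HasFDerivAt (coordFn (.inl i))
      ((ContinuousLinearMap.proj i).comp (ContinuousLinearMap.fst ℝ R3 R3)) x :=
    ((ContinuousLinearMap.proj i).comp (ContinuousLinearMap.fst ℝ R3 R3)).hasFDerivAt
  have hM (i : Fin 3) : HasFDerivAt (coordFn (.inr i))
      ((ContinuousLinearMap.proj i).comp (ContinuousLinearMap.snd ℝ R3 R3)) x :=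
    ((ContinuousLinearMap.proj i).comp (ContinuousLinearMap.snd ℝ R3 R3)).hasFDerivAt
  cases u <;> cases w <;> simp [pd, (hγ _).fderiv, (hM _).fderiv, Pi.single_apply, eq_comm]

theorem pb_coordFn (π : St → (Fin 3 ⊕ Fin 3) → (Fin 3 ⊕ Fin 3) → ℝ) (F : St → ℝ)
    (w : Fin 3 ⊕ Fin 3) (x : St) : pb π F (coordFn w) x = ∑ u, π x u w * pd u F x := by
  simp [pb, pd_coordFn]

def gradγ (F : St → ℝ) (x : St) : R3 := fun j => pd (.inl j) F x

def gradM (F : St → ℝ) (x : St) : R3 := fun j => pd (.inr j) F x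

theorem pb_piG_coordFn_inl (a : R3) (d : ℝ) (F : St → ℝ) (x : St) (i : Fin 3) :
    pb (piG a d) F (coordFn (.inl i)) x = gfun a d x.1 * cross x.1 (gradM F x) i := by
  simp only [pb_coordFn, Fintype.sum_sum_type, piG, zero_mul, Finset.sum_const_zero, zero_add,
    gradM, ← sum_eps_mul, Fin.sum_univ_three]
  ring

theorem pb_piG_coordFn_inr (a : R3) (d : ℝ) (F : St → ℝ) (x : St) (i : Fin 3) :
    pb (piG a d) F (coordFn (.inr i)) x = gfun a d x.1 * cross x.1 (gradγ F x) i +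
      gfun a d x.1 * cross x.2 (gradM F x) i -
        d * dot3 x.2 (Aapp a x.1) / gfun a d x.1 * cross x.1 (gradM F x) i := by
  simp only [pb_coordFn, Fintype.sum_sum_type, piG, gradγ, gradM, ← sum_eps_mul,
    Fin.sum_univ_three]
  ring

section

variable {E : Type*} [NormedAddCommGroup E] [NormedSpace ℝ E]

theorem HasFDerivAt.dot3_Aapp {f g : E → R3} {f' g' : E →L[ℝ] R3} {x : E} (a : R3)
    (hf : HasFDerivAt f f' x) (hg : HasFDerivAt g g' x) :
    HasFDerivAt (fun y => dot3 (f y) (Aapp a (g y)))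
      (∑ i, (f x i • a i • (ContinuousLinearMap.proj i).comp g' +
        (a i * g x i) • (ContinuousLinearMap.proj i).comp f')) x :=
  HasFDerivAt.fun_sum fun i _ => ((hasFDerivAt_apply i _).comp x hf).mul
    (((hasFDerivAt_apply i _).comp x hg).const_mul (a i))

theorem sum_smul_proj_apply (a u w : R3) (f' g' : E →L[ℝ] R3) (v : E) :
    (∑ i, (u i • a i • (ContinuousLinearMap.proj i).comp g' +
        (a i * w i) • (ContinuousLinearMap.proj i).comp f')) v =
      dot3 u (Aapp a (g' v)) + dot3 (f' v) (Aapp a w) := by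
  simp [dot3, Aapp, Finset.sum_add_distrib, mul_comm]

end

theorem dot3_omg (a : R3) (d : ℝ) (x : St) (w : R3) :
    dot3 (omg a d x) w = dot3 x.2 (Aapp a w) +
      d * dot3 x.1 (Aapp a x.2) / (1 - d * dot3 x.1 (Aapp a x.1)) * dot3 x.1 (Aapp a w) := by
  simp only [dot3, omg, Aapp, Fin.sum_univ_three]
  ring

theorem kineticEnergy_eq (a : R3) (d : ℝ) :
    (fun y : St => dot3 y.2 (omg a d y) / 2) = fun y => 2⁻¹ * (dot3 y.2 (Aapp a y.2) +
      d * dot3 y.1 (Aapp a y.2) ^ 2 * (1 - d * dot3 y.1 (Aapp a y.1))⁻¹) := by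
  funext y
  simp only [dot3, omg, Aapp, Fin.sum_univ_three]
  ring

theorem fderiv_kineticEnergy_apply (a : R3) (d : ℝ) (x : St)
    (hx : 1 - d * dot3 x.1 (Aapp a x.1) ≠ 0) (v : St) :
    fderiv ℝ (fun y : St => dot3 y.2 (omg a d y) / 2) x v = dot3 (omg a d x) v.2 +
      d * dot3 x.1 (Aapp a x.2) / (1 - d * dot3 x.1 (Aapp a x.1)) * dot3 (omg a d x) v.1 := by
  have hP := hasFDerivAt_fst.dot3_Aapp a (hasFDerivAt_snd (p := x))
  have hQ := hasFDerivAt_snd.dot3_Aapp a (hasFDerivAt_snd (p := x))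
  have hC := ((hasFDerivAt_fst.dot3_Aapp a (hasFDerivAt_fst (p := x))).const_mul d).const_sub 1
  have hCinv := (hasDerivAt_inv hx).comp_hasFDerivAt x hC
  simp only [Function.comp_def] at hCinv
  have hH := (hQ.fun_add (((hP.pow 2).const_mul d).fun_mul hCinv)).const_mul 2⁻¹
  rw [kineticEnergy_eq, hH.fderiv]
  simp only [add_apply, smul_apply, neg_apply, sum_smul_proj_apply, dot3_omg, smul_eq_mul,
    ContinuousLinearMap.coe_fst', ContinuousLinearMap.coe_snd']
  rw [dot3_Aapp_comm a v.2 x.2, dot3_Aapp_comm a v.1 x.1, dot3_Aapp_comm a v.1 x.2]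
  generalize 1 - d * dot3 x.1 (Aapp a x.1) = c at hx ⊢
  field_simp
  ring

theorem gradM_kineticEnergy (a : R3) (d : ℝ) (x : St)
    (hx : 1 - d * dot3 x.1 (Aapp a x.1) ≠ 0) :
    gradM (fun y => dot3 y.2 (omg a d y) / 2) x = omg a d x := by
  funext j
  simp only [gradM, pd, fderiv_kineticEnergy_apply a d x hx, dot3_single_one]
  simp [dot3]

theorem gradγ_kineticEnergy (a : R3) (d : ℝ) (x : St)
    (hx : 1 - d * dot3 x.1 (Aapp a x.1) ≠ 0) :
    gradγ (fun y => dot3 y.2 (omg a d y) / 2) x =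
      (d * dot3 x.1 (Aapp a x.2) / (1 - d * dot3 x.1 (Aapp a x.1))) • omg a d x := by
  funext j
  simp only [gradγ, pd, fderiv_kineticEnergy_apply a d x hx, dot3_single_one]
  simp [dot3]

theorem conformally_hamiltonian_chaplygin_general
    (a : R3) (d : ℝ)
    (x : St) (hx : 0 < 1 - d * dot3 x.1 (Aapp a x.1)) :
    (∀ i : Fin 3, cross x.1 (omg a d x) i =
      (gfun a d x.1)⁻¹ *
        pb (piG a d) (fun y => dot3 y.2 (omg a d y) / 2) (coordFn (.inl i)) x) ∧
    (∀ i : Fin 3, cross x.2 (omg a d x) i =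
      (gfun a d x.1)⁻¹ *
        pb (piG a d) (fun y => dot3 y.2 (omg a d y) / 2) (coordFn (.inr i)) x) := by
  have hg : 0 < gfun a d x.1 := Real.sqrt_pos.mpr hx
  have hg_sq : gfun a d x.1 ^ 2 = 1 - d * dot3 x.1 (Aapp a x.1) := Real.sq_sqrt hx.le
  refine ⟨fun i => ?_, fun i => ?_⟩
  · rw [pb_piG_coordFn_inl, gradM_kineticEnergy a d x hx.ne', inv_mul_cancel_left₀ hg.ne']
  · rw [pb_piG_coordFn_inr, gradγ_kineticEnergy a d x hx.ne', gradM_kineticEnergy a d x hx.ne',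
      dot3_Aapp_comm a x.2 x.1, ← hg_sq]
    simp only [cross_eq_crossProduct, map_smul, Pi.smul_apply, smul_eq_mul]
    field_simp
    ring

/-- for κ = 1 the reduced Chaplygin vector field
X = (γ × ω, M × ω) is conformally Hamiltonian: X = g⁻¹ P_g dH with H = H1/2,
componentwise X_k = g⁻¹ {H, x_k}_g. -/
theorem conformally_hamiltonian_chaplygin
    (a : R3) (d : ℝ) (hd : 0 < d)
    (x : St) (hx : 0 < 1 - d * dot3 x.1 (Aapp a x.1)) :
    (∀ i : Fin 3, cross x.1 (omg a d x) i =
      (gfun a d x.1)⁻¹ *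
        pb (piG a d) (fun y => dot3 y.2 (omg a d y) / 2) (coordFn (.inl i)) x) ∧
    (∀ i : Fin 3, cross x.2 (omg a d x) i =
      (gfun a d x.1)⁻¹ *
        pb (piG a d) (fun y => dot3 y.2 (omg a d y) / 2) (coordFn (.inr i)) x) :=
  conformally_hamiltonian_chaplygin_general a d x hx
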